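/- arXiv:0904.3356 — 3 statements merged into one kernel-verified Lean document; each statement's English description precedes it below -/
import Mathlib

section
/- Define φ(x,c) = exp(x²/(2c)) for x > 0 and φ(x,c) = 1 for x ≤ 0, where c > 0. Suppose R¹,...,Rᴺ ∈ ℝ and c > 0 satisfy (1/N)∑ᵢ φ(Rⁱ, c) = e. Let 0 < ε ≤ 1 and suppose R is a value such that at least ⌈εN⌉ of the Rⁱ satisfy Rⁱ ≥ R. Then R ≤ √(2c(ln(1/ε) + 1)). -/
noncomputable def phi (x c : ℝ) : ℝ := if 0 < x then Real.exp (x ^ 2 / (2 * c)) else 1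

theorem regret_bound_quantile (N : ℕ) (hN : 1 ≤ N) (Rs : Fin N → ℝ) (c : ℝ) (hc : 0 < c)
    (hpot : (1 / (N : ℝ)) * ∑ i, phi (Rs i) c = Real.exp 1)
    (ε : ℝ) (hε0 : 0 < ε) (hε1 : ε ≤ 1) (R : ℝ)
    (hcount : ⌈ε * N⌉₊ ≤ (Finset.univ.filter fun i => R ≤ Rs i).card) :
    R ≤ Real.sqrt (2 * c * (Real.log (1 / ε) + 1)) := by
  rcases le_or_gt R 0 with hR | hR
  · exact hR.trans (Real.sqrt_nonneg _)
  have hNpos : (0 : ℝ) < N := by exact_mod_cast hN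
  -- total sum equals N * e
  have hsum : ∑ i, phi (Rs i) c = N * Real.exp 1 := by
    field_simp at hpot
    linarith [hpot]
  set S := Finset.univ.filter fun i => R ≤ Rs i with hS
  have hphi_nonneg : ∀ i : Fin N, 0 ≤ phi (Rs i) c := by
    intro i; unfold phi; split <;> positivity
  have hlow : ∀ i ∈ S, Real.exp (R ^ 2 / (2 * c)) ≤ phi (Rs i) c := by
    intro i hi
    simp only [hS, Finset.mem_filter] at hi
    have hRi : R ≤ Rs i := hi.2
    have hpos : 0 < Rs i := lt_of_lt_of_le hR hRi
    unfold phi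
    rw [if_pos hpos]
    apply Real.exp_le_exp.mpr
    apply div_le_div_of_nonneg_right _ (by linarith)
    exact pow_le_pow_left₀ hR.le hRi 2
  have hcard : (S.card : ℝ) ≥ ε * N := by
    calc (S.card : ℝ) ≥ (⌈ε * N⌉₊ : ℝ) := by exact_mod_cast hcount
      _ ≥ ε * N := Nat.le_ceil _
  have hsumS : (S.card : ℝ) * Real.exp (R ^ 2 / (2 * c)) ≤ ∑ i, phi (Rs i) c := by
    calc (S.card : ℝ) * Real.exp (R ^ 2 / (2 * c))
        = ∑ _i ∈ S, Real.exp (R ^ 2 / (2 * c)) := by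
          rw [Finset.sum_const, nsmul_eq_mul]
      _ ≤ ∑ i ∈ S, phi (Rs i) c := Finset.sum_le_sum hlow
      _ ≤ ∑ i, phi (Rs i) c :=
          Finset.sum_le_sum_of_subset_of_nonneg (Finset.filter_subset _ _)
            (fun i _ _ => hphi_nonneg i)
  have key : ε * N * Real.exp (R ^ 2 / (2 * c)) ≤ N * Real.exp 1 := by
    rw [← hsum]
    refine le_trans ?_ hsumS
    exact mul_le_mul_of_nonneg_right hcard (Real.exp_pos _).le
  have hexp : Real.exp (R ^ 2 / (2 * c)) ≤ Real.exp 1 / ε := by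
    rw [le_div_iff₀ hε0]
    nlinarith [Real.exp_pos (R ^ 2 / (2 * c)), Real.exp_pos 1]
  have hlog : R ^ 2 / (2 * c) ≤ Real.log (1 / ε) + 1 := by
    have := Real.log_le_log (Real.exp_pos _) hexp
    rw [Real.log_exp, Real.log_div (Real.exp_ne_zero 1) (ne_of_gt hε0), Real.log_exp] at this
    rw [Real.log_div one_ne_zero (ne_of_gt hε0), Real.log_one]
    linarith
  have hR2 : R ^ 2 ≤ 2 * c * (Real.log (1 / ε) + 1) := by
    rw [div_le_iff₀ (by linarith)] at hlog
    linarith [hlog]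
  have hynn : 0 ≤ 2 * c * (Real.log (1 / ε) + 1) := by
    have : 0 ≤ Real.log (1 / ε) := Real.log_nonneg (by rw [le_div_iff₀ hε0]; linarith)
    positivity
  exact (Real.le_sqrt hR.le hynn).mpr hR2
end

section
/- Let x₁,...,xₘ be positive reals satisfying the constraint (1/N)∑ᵢ₌₁^m exp(xᵢ²/2) = e with m ≤ N. Then ∑ᵢ (1 + xᵢ²)·exp(xᵢ²/2) ≤ 6·∑ᵢ xᵢ²·exp(xᵢ²/2). -/
theorem key_ratio_bound (N m : ℕ) (hN : 1 ≤ N) (hm : m ≤ N) (x : Fin m → ℝ)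
    (hx : ∀ i, 0 < x i)
    (hnorm : (1 / (N : ℝ)) * ∑ i, Real.exp (x i ^ 2 / 2) = Real.exp 1) :
    ∑ i, (1 + x i ^ 2) * Real.exp (x i ^ 2 / 2) ≤
      6 * ∑ i, x i ^ 2 * Real.exp (x i ^ 2 / 2) := by
  set e := Real.exp 1 with he
  have he2 : (2:ℝ) < e := by
    have := Real.exp_one_gt_d9; rw [he]; linarith
  have hc : (0:ℝ) < e - 1 := by linarith
  -- pointwise key inequality
  have key : ∀ t : ℝ, 0 ≤ t →
      (e - 1) * ((1 + t) * Real.exp (t / 2)) + Real.exp (t / 2) ≤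
      (e - 1) * (6 * (t * Real.exp (t / 2))) + e := by
    intro t ht
    have hE : 0 < Real.exp (t / 2) := Real.exp_pos _
    have h1 : (1 - t / 2) * Real.exp (t / 2) ≤ 1 := by
      have h2 := Real.add_one_le_exp (-(t / 2))
      have h3 : Real.exp (-(t / 2)) * Real.exp (t / 2) = 1 := by
        rw [← Real.exp_add]; ring_nf; exact Real.exp_zero
      nlinarith
    rcases le_or_gt e (5 * (e - 1) * t) with h | h
    · nlinarith [mul_nonneg (sub_nonneg.2 h) hE.le]
    · nlinarith [mul_le_mul_of_nonneg_right h1 (by positivity : (0:ℝ) ≤ e),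
        mul_nonneg (by linarith : (0:ℝ) ≤ e - 2) (mul_nonneg ht hE.le),
        mul_nonneg ht hE.le, hE]
  have hNpos : (0:ℝ) < (N : ℝ) := by exact_mod_cast hN
  set A := ∑ i, (1 + x i ^ 2) * Real.exp (x i ^ 2 / 2) with hA
  set B := ∑ i, x i ^ 2 * Real.exp (x i ^ 2 / 2) with hB
  set S := ∑ i, Real.exp (x i ^ 2 / 2) with hS
  have hSN : S = (N : ℝ) * e := by
    field_simp at hnorm
    linarith
  have hsum := Finset.sum_le_sum (fun i (_ : i ∈ Finset.univ) => key (x i ^ 2) (sq_nonneg (x i)))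
  have h5 : (e - 1) * A + S ≤ (e - 1) * (6 * B) + (m : ℝ) * e := by
    calc (e - 1) * A + S
        = ∑ i, ((e - 1) * ((1 + x i ^ 2) * Real.exp (x i ^ 2 / 2)) + Real.exp (x i ^ 2 / 2)) := by
          rw [hA, hS, Finset.mul_sum, ← Finset.sum_add_distrib]
      _ ≤ ∑ i : Fin m, ((e - 1) * (6 * (x i ^ 2 * Real.exp (x i ^ 2 / 2))) + e) := hsum
      _ = (e - 1) * (6 * B) + (m : ℝ) * e := by
          rw [Finset.sum_add_distrib, Finset.sum_const, Finset.card_univ, Fintype.card_fin,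
            nsmul_eq_mul, hB, Finset.mul_sum, Finset.mul_sum]
  have hme : (m : ℝ) * e ≤ (N : ℝ) * e := by
    have : (m : ℝ) ≤ (N : ℝ) := by exact_mod_cast hm
    nlinarith
  have h6 : (e - 1) * A ≤ (e - 1) * (6 * B) := by
    rw [hSN] at h5; linarith
  exact le_of_mul_le_mul_left h6 hc
end

section
/- Let c > 0 and let R¹,...,Rᴺ ∈ ℝ with at least one Rⁱ > 0 and (1/N)∑ᵢ φ(Rⁱ,c) = e where φ(x,c) = exp(x²/(2c)) for x > 0, else 1. Let V¹,...,Vᴺ ≥ 0 with Vⁱ ≤ V for all i. Then (∑_{i: Rⁱ>0} Vⁱ·(1/c + (Rⁱ)²/c²)·exp((Rⁱ)²/(2c))) / (2·∑_{i: Rⁱ>0} ((Rⁱ)²/c²)·exp((Rⁱ)²/(2c))) ≤ 3V. -/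
/-!
Write `xᵢ = (Rⁱ)² / (2c)`. Since `(1 - x) eˣ ≤ 1`, each positive regret has `e^{xᵢ} ≤ 1 + xᵢ e^{xᵢ}`,
so the normalization `Σ φ = N e` forces `Σ xᵢ e^{xᵢ} ≥ N (e - 1) ≥ N`, and hence
`Σ e^{xᵢ} ≤ 2 Σ xᵢ e^{xᵢ}`. In the numerator the `1/c` part is therefore dominated by the `(Rⁱ)²/c²`
part, and the quotient is at most `V`.
-/

open Real Finset

lemma exp_le_one_add_mul_exp (x : ℝ) : exp x ≤ 1 + x * exp x := by
  have h : (1 - x) * exp x ≤ 1 :=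
    calc (1 - x) * exp x ≤ exp (-x) * exp x := by gcongr; linarith [add_one_le_exp (-x)]
      _ = 1 := by rw [← exp_add, neg_add_cancel, exp_zero]
  linarith

lemma sum_exp_le_card_add_sum_mul_exp {ι : Type*} (s : Finset ι) (x : ι → ℝ) :
    ∑ i ∈ s, exp (x i) ≤ #s + ∑ i ∈ s, x i * exp (x i) := by
  simpa [sum_add_distrib] using sum_le_sum fun i _ => exp_le_one_add_mul_exp (x i)

lemma sum_exp_le_two_mul_sum_mul_exp {ι : Type*} {s : Finset ι} {x : ι → ℝ} {m : ℝ} (hm : 0 ≤ m)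
    (h : ∑ i ∈ s, exp (x i) + m = (#s + m) * exp 1) :
    ∑ i ∈ s, exp (x i) ≤ 2 * ∑ i ∈ s, x i * exp (x i) := by
  have hA := sum_exp_le_card_add_sum_mul_exp s x
  have he : 2 ≤ exp 1 := by linarith [add_one_le_exp 1]
  have hn : (0 : ℝ) ≤ #s + m := by positivity
  have hB : #s + m ≤ ∑ i ∈ s, x i * exp (x i) := by nlinarith
  linarith

lemma sum_phi_eq {ι : Type*} [Fintype ι] (R : ι → ℝ) (c : ℝ) :
    ∑ i, phi (R i) c = ∑ i with 0 < R i, exp (R i ^ 2 / (2 * c)) + #{i | ¬ 0 < R i} := by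
  simp [phi, sum_ite]

lemma sum_exp_le_of_sum_phi_eq {ι : Type*} [Fintype ι] {R : ι → ℝ} {c : ℝ}
    (h : ∑ i, phi (R i) c = Fintype.card ι * exp 1) :
    ∑ i with 0 < R i, exp (R i ^ 2 / (2 * c)) ≤
      2 * ∑ i with 0 < R i, R i ^ 2 / (2 * c) * exp (R i ^ 2 / (2 * c)) := by
  refine sum_exp_le_two_mul_sum_mul_exp (m := #{i | ¬ 0 < R i}) (Nat.cast_nonneg _) ?_
  rw [← sum_phi_eq, h, ← Nat.cast_add, card_filter_add_card_filter_not, card_univ]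

theorem dc_dt_bound_general (N : ℕ) (c : ℝ) (hc : 0 < c)
    (R : Fin N → ℝ)
    (hpot : (1 / (N : ℝ)) * ∑ i, phi (R i) c = Real.exp 1)
    (Vi : Fin N → ℝ) (V : ℝ) (hVi0 : ∀ i, 0 ≤ Vi i) (hViV : ∀ i, Vi i ≤ V) :
    (∑ i ∈ Finset.univ.filter fun i => 0 < R i,
        Vi i * (1 / c + R i ^ 2 / c ^ 2) * Real.exp (R i ^ 2 / (2 * c))) /
      (2 * ∑ i ∈ Finset.univ.filter fun i => 0 < R i,
        R i ^ 2 / c ^ 2 * Real.exp (R i ^ 2 / (2 * c))) ≤ 3 * V := by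
  have hN : 0 < N := Nat.pos_of_ne_zero fun h => by simp [h] at hpot; exact (exp_pos 1).ne hpot
  have hV : 0 ≤ V := (hVi0 ⟨0, hN⟩).trans (hViV _)
  have hsum : ∑ i, phi (R i) c = Fintype.card (Fin N) * exp 1 := by
    field_simp at hpot
    simpa [mul_comm] using hpot
  set D := ∑ i with 0 < R i, R i ^ 2 / c ^ 2 * exp (R i ^ 2 / (2 * c))
  have hD : 0 ≤ D := sum_nonneg fun i _ => by positivity
  have hcD : ∑ i with 0 < R i, 1 / c * exp (R i ^ 2 / (2 * c)) ≤ D :=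
    calc _ = 1 / c * ∑ i with 0 < R i, exp (R i ^ 2 / (2 * c)) := by rw [mul_sum]
      _ ≤ 1 / c * (2 * ∑ i with 0 < R i, R i ^ 2 / (2 * c) * exp (R i ^ 2 / (2 * c))) := by
        gcongr; exact sum_exp_le_of_sum_phi_eq hsum
      _ = D := by rw [mul_sum, mul_sum]; refine sum_congr rfl fun i _ => ?_; field_simp
  refine div_le_of_le_mul₀ (by positivity) (by positivity) ?_
  calc _ ≤ ∑ i with 0 < R i, V * (1 / c * exp (R i ^ 2 / (2 * c)) +
          R i ^ 2 / c ^ 2 * exp (R i ^ 2 / (2 * c))) :=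
        sum_le_sum fun i _ => by rw [← add_mul, ← mul_assoc]; gcongr; exact hViV i
    _ ≤ V * (2 * D) := by rw [← mul_sum, sum_add_distrib]; gcongr; linarith
    _ ≤ 3 * V * (2 * D) := by nlinarith

theorem dc_dt_bound (N : ℕ) (hN : 1 ≤ N) (c : ℝ) (hc : 0 < c)
    (R : Fin N → ℝ) (hpos : ∃ i, 0 < R i)
    (hpot : (1 / (N : ℝ)) * ∑ i, phi (R i) c = Real.exp 1)
    (Vi : Fin N → ℝ) (V : ℝ) (hVi0 : ∀ i, 0 ≤ Vi i) (hViV : ∀ i, Vi i ≤ V) :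
    (∑ i ∈ Finset.univ.filter fun i => 0 < R i,
        Vi i * (1 / c + R i ^ 2 / c ^ 2) * Real.exp (R i ^ 2 / (2 * c))) /
      (2 * ∑ i ∈ Finset.univ.filter fun i => 0 < R i,
        R i ^ 2 / c ^ 2 * Real.exp (R i ^ 2 / (2 * c))) ≤ 3 * V :=
  dc_dt_bound_general N c hc R hpot Vi V hVi0 hViV
end
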